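/- For every partial epistemic frame M and every KB4 formula Φ: Φ is valid in M (true at every world under every valuation) if and only if t(Φ) is valid in the chromatic hypergraph η(M) (true at every hyperedge under every valuation with empty sets of agent atomic propositions). -/

import Mathlib

/-! ## Syntax of the two-level chromatic hypergraph logic 2CH -/

mutual
/-- Agent formulas of sort `a`, for each agent `a : A`. -/
inductive AForm (A : Type) (APa : A → Type) (APe : Type) : A → Type where
  | atom {a : A} : APa a → AForm A APa APe a
  | bot  {a : A} : AForm A APa APe a
  | neg  {a : A} : AForm A APa APe a → AForm A APa APe a
  | and  {a : A} : AForm A APa APe a → AForm A APa APe a → AForm A APa APe a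
  | dia  (a : A) : WForm A APa APe → AForm A APa APe a

/-- World formulas. -/
inductive WForm (A : Type) (APa : A → Type) (APe : Type) : Type where
  | atom : APe → WForm A APa APe
  | bot  : WForm A APa APe
  | neg  : WForm A APa APe → WForm A APa APe
  | and  : WForm A APa APe → WForm A APa APe → WForm A APa APe
  | exi  (a : A) : AForm A APa APe a → WForm A APa APe
end

variable {A : Type} {APa : A → Type} {APe : Type}

/-- Implication of agent formulas. -/
def implA {a : A} (φ ψ : AForm A APa APe a) : AForm A APa APe a := .neg (.and φ (.neg ψ))
/-- Disjunction of agent formulas. -/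
def orA {a : A} (φ ψ : AForm A APa APe a) : AForm A APa APe a := .neg (.and (.neg φ) (.neg ψ))
/-- `⊤` as an agent formula. -/
def topA (a : A) : AForm A APa APe a := .neg .bot
/-- Implication of world formulas. -/
def implW (Φ Ψ : WForm A APa APe) : WForm A APa APe := .neg (.and Φ (.neg Ψ))
/-- Disjunction of world formulas. -/
def orW (Φ Ψ : WForm A APa APe) : WForm A APa APe := .neg (.and (.neg Φ) (.neg Ψ))
/-- The dual modality `□_a Φ := ¬◇_a ¬Φ`. -/
def boxF (a : A) (Φ : WForm A APa APe) : AForm A APa APe a := .neg (.dia a (.neg Φ))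
/-- The dual modality `A_a φ := ¬E_a ¬φ`. -/
def allF (a : A) (φ : AForm A APa APe a) : WForm A APa APe := .neg (.exi a (.neg φ))
/-- Finite disjunction of a list of world formulas. -/
def listOrW : List (WForm A APa APe) → WForm A APa APe
  | [] => .bot
  | Φ :: rest => orW Φ (listOrW rest)

/-- The non-emptiness axiom `⋁_{a∈A} E_a ⊤`. -/
noncomputable def neAxiom (A : Type) [Fintype A] (APa : A → Type) (APe : Type) : WForm A APa APe :=
  listOrW (((Finset.univ : Finset A).toList).map fun a => WForm.exi a (topA a))

/-- `φ` is an instance of a classical propositional tautology (agent sort):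
every Boolean valuation respecting `⊥`, `¬`, `∧` makes it true. -/
def ATaut {a : A} (φ : AForm A APa APe a) : Prop :=
  ∀ v : AForm A APa APe a → Bool,
    v .bot = false →
    (∀ ψ : AForm A APa APe a, v ψ.neg = !(v ψ)) →
    (∀ ψ χ : AForm A APa APe a, v (ψ.and χ) = (v ψ && v χ)) →
    v φ = true

/-- `Φ` is an instance of a classical propositional tautology (world sort). -/
def WTaut (Φ : WForm A APa APe) : Prop :=
  ∀ v : WForm A APa APe → Bool,
    v .bot = false →
    (∀ Ψ : WForm A APa APe, v Ψ.neg = !(v Ψ)) →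
    (∀ Ψ Χ : WForm A APa APe, v (Ψ.and Χ) = (v Ψ && v Χ)) →
    v Φ = true

/-! ## The proof system of 2CH -/

mutual
/-- Derivability `⊢_a` of agent formulas of sort `a`. -/
inductive ProveA (A : Type) [Fintype A] (APa : A → Type) (APe : Type) :
    ∀ {a : A}, AForm A APa APe a → Prop where
  | taut {a : A} {φ : AForm A APa APe a} : ATaut φ → ProveA A APa APe φ
  | mp {a : A} {φ ψ : AForm A APa APe a} :
      ProveA A APa APe (implA φ ψ) → ProveA A APa APe φ → ProveA A APa APe ψ
  | nec {a : A} {Φ : WForm A APa APe} :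
      ProveE A APa APe Φ → ProveA A APa APe (boxF a Φ)
  | monoDia {a : A} {Φ Ψ : WForm A APa APe} :
      ProveE A APa APe (implW Φ Ψ) →
      ProveA A APa APe (implA (AForm.dia a Φ) (AForm.dia a Ψ))
  | monoBox {a : A} {Φ Ψ : WForm A APa APe} :
      ProveE A APa APe (implW Φ Ψ) →
      ProveA A APa APe (implA (boxF a Φ) (boxF a Ψ))
  | adj1 {a : A} {Φ : WForm A APa APe} {ψ : AForm A APa APe a} :
      ProveE A APa APe (implW Φ (allF a ψ)) →
      ProveA A APa APe (implA (AForm.dia a Φ) ψ)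
  | adj2 {a : A} {φ : AForm A APa APe a} {Ψ : WForm A APa APe} :
      ProveE A APa APe (implW (WForm.exi a φ) Ψ) →
      ProveA A APa APe (implA φ (boxF a Ψ))
  | surj {a : A} {φ : AForm A APa APe a} :
      ProveA A APa APe (implA φ (AForm.dia a (WForm.exi a φ)))
  | func {a : A} {φ : AForm A APa APe a} :
      ProveA A APa APe (implA (AForm.dia a (WForm.exi a φ)) φ)

/-- Derivability `⊢_e` of world formulas. -/
inductive ProveE (A : Type) [Fintype A] (APa : A → Type) (APe : Type) :
    WForm A APa APe → Prop where
  | taut {Φ : WForm A APa APe} : WTaut Φ → ProveE A APa APe Φ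
  | mp {Φ Ψ : WForm A APa APe} :
      ProveE A APa APe (implW Φ Ψ) → ProveE A APa APe Φ → ProveE A APa APe Ψ
  | nec {a : A} {φ : AForm A APa APe a} :
      ProveA A APa APe φ → ProveE A APa APe (allF a φ)
  | monoExi {a : A} {φ ψ : AForm A APa APe a} :
      ProveA A APa APe (implA φ ψ) →
      ProveE A APa APe (implW (WForm.exi a φ) (WForm.exi a ψ))
  | monoAll {a : A} {φ ψ : AForm A APa APe a} :
      ProveA A APa APe (implA φ ψ) →
      ProveE A APa APe (implW (allF a φ) (allF a ψ))
  | adj1 {a : A} {Φ : WForm A APa APe} {ψ : AForm A APa APe a} :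
      ProveA A APa APe (implA (AForm.dia a Φ) ψ) →
      ProveE A APa APe (implW Φ (allF a ψ))
  | adj2 {a : A} {φ : AForm A APa APe a} {Ψ : WForm A APa APe} :
      ProveA A APa APe (implA φ (boxF a Ψ)) →
      ProveE A APa APe (implW (WForm.exi a φ) Ψ)
  | nonempty : ProveE A APa APe (neAxiom A APa APe)
end

/-! ## Chromatic hypergraphs and their models -/

/-- A chromatic hypergraph over the set of agents `A`. -/
structure ChromHyp (A : Type) where
  /-- hyperedges (worlds) -/
  E : Type
  /-- views of agent `a` -/
  V : A → Type
  /-- the surjective partial function assigning to a hyperedge the view of agent `a` in it -/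
  proj : ∀ a : A, E → Option (V a)
  surj : ∀ (a : A) (v : V a), ∃ e : E, proj a e = some v
  edge_nonempty : ∀ e : E, ∃ a : A, (proj a e).isSome

/-- A chromatic hypergraph model: a chromatic hypergraph together with valuations. -/
structure ChromHypModel (A : Type) (APa : A → Type) (APe : Type) extends ChromHyp A where
  valA : ∀ a : A, APa a → Set (V a)
  valE : APe → Set E

mutual
/-- Satisfaction `H, v ⊨_a φ` of an agent formula at a view of agent `a`. -/
def SatA (H : ChromHypModel A APa APe) : ∀ (a : A), H.V a → AForm A APa APe a → Prop
  | a, v, .atom p => v ∈ H.valA a p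
  | _, _, .bot => False
  | a, v, .neg φ => ¬ SatA H a v φ
  | a, v, .and φ ψ => SatA H a v φ ∧ SatA H a v ψ
  | a, v, .dia _ Φ => ∃ e : H.E, H.proj a e = some v ∧ SatE H e Φ

/-- Satisfaction `H, e ⊨_e Φ` of a world formula at a hyperedge. -/
def SatE (H : ChromHypModel A APa APe) : H.E → WForm A APa APe → Prop
  | e, .atom p => e ∈ H.valE p
  | _, .bot => False
  | e, .neg Φ => ¬ SatE H e Φ
  | e, .and Φ Ψ => SatE H e Φ ∧ SatE H e Ψ
  | e, .exi a φ => ∃ v : H.V a, H.proj a e = some v ∧ SatA H a v φ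
end


/-! ## Partial epistemic frames and the construction `η` -/

/-- A partial epistemic frame over the set of agents `A`: a set of worlds with a family
of partial equivalence relations, such that every world is related to itself by `~_a`
for at least one agent `a`. -/
structure PEFrame (A : Type) where
  /-- worlds -/
  W : Type
  /-- the partial indistinguishability relation `~_a` of agent `a` -/
  rel : A → W → W → Prop
  symm : ∀ (a : A) (w w' : W), rel a w w' → rel a w' w
  trans : ∀ (a : A) (w₁ w₂ w₃ : W), rel a w₁ w₂ → rel a w₂ w₃ → rel a w₁ w₃
  refl_exists : ∀ w : W, ∃ a : A, rel a w w

/-- The setoid of `~_a`-equivalence on the domain `{w // w ~_a w}` of the partial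
equivalence relation `~_a`. -/
def partSetoid {A : Type} (M : PEFrame A) (a : A) : Setoid {w : M.W // M.rel a w w} where
  r x y := M.rel a x.val y.val
  iseqv := ⟨fun x => x.2, fun h => M.symm _ _ _ h, fun h₁ h₂ => M.trans _ _ _ _ h₁ h₂⟩

open Classical in
/-- The construction `η`: from a partial epistemic frame to a chromatic hypergraph.
The hyperedges are the worlds, the `a`-views are the equivalence classes of `~_a`,
and `proj_a(w) = [w]_a`, defined exactly when `w ~_a w`. -/
noncomputable def etaHyp {A : Type} (M : PEFrame A) : ChromHyp A where
  E := M.W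
  V a := Quotient (partSetoid M a)
  proj a w := if h : M.rel a w w then some (Quotient.mk (partSetoid M a) ⟨w, h⟩) else none
  surj a v := by
    induction v using Quotient.ind with
    | _ x =>
      refine ⟨x.val, ?_⟩
      try dsimp only
      rw [dif_pos x.2]
  edge_nonempty e := by
    obtain ⟨a, h⟩ := M.refl_exists e
    exact ⟨a, by (try dsimp only); rw [dif_pos h]; (try rfl)⟩

/-! ## KB4 formulas, their semantics, and the translation into 2CH -/

/-- Formulas of the epistemic logic KB4. -/
inductive KB4Form (A : Type) (APe : Type) : Type where
  | atom : APe → KB4Form A APe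
  | bot  : KB4Form A APe
  | neg  : KB4Form A APe → KB4Form A APe
  | and  : KB4Form A APe → KB4Form A APe → KB4Form A APe
  | know (a : A) : KB4Form A APe → KB4Form A APe

/-- Satisfaction of KB4 formulas in a partial epistemic model
(a partial epistemic frame with a valuation on worlds). -/
def SatKB4 {A : Type} {APe : Type} (M : PEFrame A) (ℓ : APe → Set M.W) :
    M.W → KB4Form A APe → Prop
  | w, .atom p => w ∈ ℓ p
  | _, .bot => False
  | w, .neg Φ => ¬ SatKB4 M ℓ w Φ
  | w, .and Φ Ψ => SatKB4 M ℓ w Φ ∧ SatKB4 M ℓ w Ψ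
  | w, .know a Φ => ∀ w' : M.W, M.rel a w w' → SatKB4 M ℓ w' Φ

/-- The translation `t` of KB4 formulas into world formulas of 2CH, with the KB4 atomic
propositions as world atomic propositions and empty sets of agent atomic propositions:
`t(K_a Φ) = A_a □_a t(Φ)`. -/
def trKB4 {A : Type} {APe : Type} : KB4Form A APe → WForm A (fun _ => Empty) APe
  | .atom p => .atom p
  | .bot => .bot
  | .neg Φ => .neg (trKB4 Φ)
  | .and Φ Ψ => .and (trKB4 Φ) (trKB4 Ψ)
  | .know a Φ => allF a (boxF a (trKB4 Φ))

/-- A chromatic hypergraph model built from a chromatic hypergraph and valuations. -/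
def mkModel {A : Type} {APa : A → Type} {APe : Type} (Hy : ChromHyp A)
    (valA : ∀ a : A, APa a → Set (Hy.V a)) (valE : APe → Set Hy.E) :
    ChromHypModel A APa APe :=
  { toChromHyp := Hy, valA := valA, valE := valE }

/-- `η(M)` regarded as a chromatic hypergraph model, with empty sets of agent
atomic propositions and the same valuation on hyperedges (= worlds of `M`). -/
noncomputable def etaModel {A : Type} {APe : Type} (M : PEFrame A) (ℓ : APe → Set M.W) :
    ChromHypModel A (fun _ => Empty) APe :=
  mkModel (etaHyp M) (fun _ p => p.elim) ℓ

/-! In `η(M)` two worlds share an `a`-view exactly when they are `~_a`-related, and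
`A_a □_a Φ` holds at a hyperedge iff `Φ` holds at every hyperedge sharing its `a`-view.
Hence `t(K_a Φ)` quantifies over precisely the `~_a`-successors, and `t` preserves truth
world by world for every valuation. -/

namespace ChromHyp

def SameView (H : ChromHyp A) (a : A) (e e' : H.E) : Prop :=
  ∃ v, H.proj a e = some v ∧ H.proj a e' = some v

end ChromHyp

theorem satE_allF_boxF_iff (H : ChromHypModel A APa APe) (a : A) (Φ : WForm A APa APe)
    (e : H.E) : SatE H e (allF a (boxF a Φ)) ↔ ∀ e', H.SameView a e e' → SatE H e' Φ := by
  simp only [allF, boxF, SatE, SatA, ChromHyp.SameView, not_exists, not_and, not_not]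
  exact ⟨fun h e' ⟨v, hv, hv'⟩ => h v hv e' hv', fun h v hv e' hv' => h e' ⟨v, hv, hv'⟩⟩

theorem etaHyp_proj_eq_some_iff (M : PEFrame A) (a : A) (w : M.W)
    (v : (etaHyp M).V a) :
    (etaHyp M).proj a w = some v ↔
      ∃ h : M.rel a w w, Quotient.mk (partSetoid M a) ⟨w, h⟩ = v := by
  by_cases h : M.rel a w w
  · simp only [etaHyp, dif_pos h, exists_prop_of_true h]
    exact Option.some_inj
  · simp only [etaHyp, dif_neg h, reduceCtorEq]
    exact iff_of_false id fun ⟨h', _⟩ => h h'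

theorem etaHyp_sameView_iff (M : PEFrame A) (a : A) (w w' : M.W) :
    (etaHyp M).SameView a w w' ↔ M.rel a w w' := by
  simp only [ChromHyp.SameView, etaHyp_proj_eq_some_iff]
  constructor
  · rintro ⟨_, ⟨_, rfl⟩, ⟨_, hw'⟩⟩
    exact M.symm a w' w (Quotient.exact hw')
  · intro hr
    have hw : M.rel a w w := M.trans a w w' w hr (M.symm a w w' hr)
    have hw' : M.rel a w' w' := M.trans a w' w w' (M.symm a w w' hr) hr
    exact ⟨_, ⟨hw, rfl⟩, ⟨hw', Quotient.sound (M.symm a w w' hr)⟩⟩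

theorem satE_trKB4_iff (M : PEFrame A) (valA : ∀ a : A, Empty → Set ((etaHyp M).V a))
    (ℓ : APe → Set (etaHyp M).E) (Φ : KB4Form A APe) (w : M.W) :
    SatE (mkModel (etaHyp M) valA ℓ) w (trKB4 Φ) ↔ SatKB4 M ℓ w Φ := by
  induction Φ generalizing w with
  | atom p => rfl
  | bot => rfl
  | neg Φ ih => exact not_congr (ih w)
  | and Φ Ψ ihΦ ihΨ => exact and_congr (ihΦ w) (ihΨ w)
  | know a Φ ih =>
    exact (satE_allF_boxF_iff (mkModel (etaHyp M) valA ℓ) a (trKB4 Φ) w).trans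
      (forall_congr' fun w' => imp_congr (etaHyp_sameView_iff M a w w') (ih w'))

/-- For every partial epistemic frame `M` and KB4 formula `Φ`: `Φ` is valid in `M`
(true at every world under every valuation) iff `t(Φ)` is valid in the chromatic
hypergraph `η(M)` (true at every hyperedge under every valuation, with empty sets of
agent atomic propositions). -/
theorem translation_frame_validity (A : Type) [Fintype A] (APe : Type)
    (M : PEFrame A) (Φ : KB4Form A APe) :
    (∀ (ℓ : APe → Set M.W) (w : M.W), SatKB4 M ℓ w Φ) ↔
    (∀ (valA : ∀ a : A, Empty → Set ((etaHyp M).V a))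
       (valE : APe → Set (etaHyp M).E) (e : (etaHyp M).E),
      SatE (mkModel (etaHyp M) valA valE) e (trKB4 Φ)) := by
  exact ⟨fun h valA ℓ w => (satE_trKB4_iff M valA ℓ Φ w).mpr (h ℓ w),
    fun h ℓ w => (satE_trKB4_iff M (fun _ p => p.elim) ℓ Φ w).mp (h _ ℓ w)⟩
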